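/- If u solves Δu + f(x,u) = 0 on Ω, z = x·∇u, and F(x,u) = ∫₀ᵘ f(x,t)dt, then the pointwise differential identity holds: Σᵢ ∂/∂xᵢ[ z u_{xᵢ} - u z_{xᵢ} + xᵢ(2F(x,u) - u f(x,u)) ] = 2n F(x,u) + (2-n) u f(x,u) + 2 Σᵢ xᵢ F_{xᵢ}(x,u) on Ω. -/

import Mathlib

/-!
Expanding the divergence, the products `∂ᵢz ∂ᵢu` cancel, so `Σᵢ ∂ᵢ(z ∂ᵢu - u ∂ᵢz) = z Δu - u Δz`,
while `Σᵢ ∂ᵢ(xᵢ G) = n G + x·∇G` for `G = 2F(x,u) - u f(x,u)`. For `z = x·∇u` one has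
`Δz = 2Δu + x·∇(Δu)`, and differentiating the equation gives `∇(Δu) = -∇[f(x,u(x))]`; this
cancels the term `-u x·∇[f(x,u(x))]` of `x·∇G`. The analytic input is that
`(x, t) ↦ ∫₀ᵗ f(x,s) ds` is differentiable with `∂ₜF = f`, so that by the chain rule
`∇[F(x,u(x))] = ∇ₓF + f ∇u`.
-/

open MeasureTheory Set Real
open scoped RealInnerProductSpace
noncomputable section

abbrev Euc (n : ℕ) := EuclideanSpace ℝ (Fin n)

/-- The partial derivative of `f` in the `i`-th coordinate direction. -/
def pd {n : ℕ} (f : Euc n → ℝ) (i : Fin n) (x : Euc n) : ℝ :=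
  fderiv ℝ f x (EuclideanSpace.single i 1)

/-- The Laplacian of `f`. -/
def lap {n : ℕ} (f : Euc n → ℝ) (x : Euc n) : ℝ :=
  ∑ i, pd (fun y => pd f i y) i x

open Filter Topology

section PartialDerivative

variable {n : ℕ} {f g : Euc n → ℝ} {x : Euc n}

theorem pd_congr (h : f =ᶠ[𝓝 x] g) (i : Fin n) : pd f i x = pd g i x := by
  rw [pd, pd, h.fderiv_eq]

theorem HasFDerivAt.pd_eq {f' : Euc n →L[ℝ] ℝ} (h : HasFDerivAt f f' x) (i : Fin n) :
    pd f i x = f' (EuclideanSpace.single i 1) := by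
  rw [pd, h.fderiv]

theorem pd_add (hf : DifferentiableAt ℝ f x) (hg : DifferentiableAt ℝ g x) (i : Fin n) :
    pd (fun y => f y + g y) i x = pd f i x + pd g i x :=
  (hf.hasFDerivAt.add hg.hasFDerivAt).pd_eq i

theorem pd_sub (hf : DifferentiableAt ℝ f x) (hg : DifferentiableAt ℝ g x) (i : Fin n) :
    pd (fun y => f y - g y) i x = pd f i x - pd g i x :=
  (hf.hasFDerivAt.sub hg.hasFDerivAt).pd_eq i

theorem pd_neg (i : Fin n) : pd (fun y => -f y) i x = -pd f i x := by
  rw [pd, fderiv_fun_neg]; rfl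

theorem pd_const_mul (c : ℝ) (hg : DifferentiableAt ℝ g x) (i : Fin n) :
    pd (fun y => c * g y) i x = c * pd g i x :=
  (hg.hasFDerivAt.const_mul c).pd_eq i

theorem pd_mul (hf : DifferentiableAt ℝ f x) (hg : DifferentiableAt ℝ g x) (i : Fin n) :
    pd (fun y => f y * g y) i x = pd f i x * g x + f x * pd g i x := by
  rw [pd, fderiv_fun_mul hf hg]
  simp only [add_apply, smul_apply, smul_eq_mul]
  rw [pd, pd]
  ring

theorem pd_sum {ι : Type*} (s : Finset ι) {f : ι → Euc n → ℝ}
    (h : ∀ j ∈ s, DifferentiableAt ℝ (f j) x) (i : Fin n) :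
    pd (fun y => ∑ j ∈ s, f j y) i x = ∑ j ∈ s, pd (f j) i x := by
  rw [pd, fderiv_fun_sum h, sum_apply]; rfl

theorem pd_coord (j i : Fin n) : pd (fun y : Euc n => y j) i x = if i = j then 1 else 0 := by
  have h : HasFDerivAt (fun y : Euc n => y j) (EuclideanSpace.proj (𝕜 := ℝ) j) x :=
    (EuclideanSpace.proj (𝕜 := ℝ) j).hasFDerivAt
  rw [h.pd_eq i]
  simp [eq_comm]

theorem differentiableAt_coord (j : Fin n) : DifferentiableAt ℝ (fun y : Euc n => y j) x :=
  (EuclideanSpace.proj (𝕜 := ℝ) j).differentiableAt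

theorem ContDiffAt.pd {m k : WithTop ℕ∞} (h : ContDiffAt ℝ k f x) (hk : m + 1 ≤ k) (i : Fin n) :
    ContDiffAt ℝ m (pd f i) x :=
  ((h.of_le hk).fderiv_right le_rfl).clm_apply contDiffAt_const

theorem pd_pd_eq_fderiv_fderiv (h : DifferentiableAt ℝ (fderiv ℝ f) x) (i j : Fin n) :
    pd (pd f j) i x =
      fderiv ℝ (fderiv ℝ f) x (EuclideanSpace.single i 1) (EuclideanSpace.single j 1) := by
  rw [pd, show pd f j = fun y => fderiv ℝ f y (EuclideanSpace.single j 1) from rfl,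
    fderiv_clm_apply h (differentiableAt_const _)]
  simp

theorem pd_pd_comm (h : ContDiffAt ℝ 2 f x) (i j : Fin n) :
    pd (pd f j) i x = pd (pd f i) j x := by
  have hd : DifferentiableAt ℝ (fderiv ℝ f) x :=
    (h.fderiv_right (m := 1) (by norm_num)).differentiableAt one_ne_zero
  rw [pd_pd_eq_fderiv_fderiv hd, pd_pd_eq_fderiv_fderiv hd]
  exact h.isSymmSndFDerivAt (by simp [minSmoothness_of_isRCLikeNormedField]) _ _

theorem pd_sum_coord_mul {g : Fin n → Euc n → ℝ} (h : ∀ j, DifferentiableAt ℝ (g j) x)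
    (i : Fin n) : pd (fun y => ∑ j, y j * g j y) i x = g i x + ∑ j, x j * pd (g j) i x := by
  rw [pd_sum Finset.univ (f := fun j y => y j * g j y)
    (fun j _ => (differentiableAt_coord j).mul (h j)) i]
  simp only [pd_mul (differentiableAt_coord _) (h _), pd_coord, Finset.sum_add_distrib, ite_mul,
    one_mul, zero_mul, Finset.sum_ite_eq, Finset.mem_univ, if_true]

theorem sum_pd_coord_mul (hg : DifferentiableAt ℝ g x) :
    ∑ i, pd (fun y => y i * g y) i x = n * g x + ∑ i, x i * pd g i x := by
  simp only [pd_mul (differentiableAt_coord _) hg, pd_coord, if_true, one_mul,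
    Finset.sum_add_distrib, Finset.sum_const, Finset.card_univ, Fintype.card_fin, nsmul_eq_mul]

theorem sum_pd_mul_pd_sub_mul_pd (hf : ContDiffAt ℝ 2 f x) (hg : ContDiffAt ℝ 2 g x) :
    ∑ i, pd (fun y => f y * pd g i y - g y * pd f i y) i x = f x * lap g x - g x * lap f x := by
  have hd : ∀ {h : Euc n → ℝ}, ContDiffAt ℝ 2 h x →
      DifferentiableAt ℝ h x ∧ ∀ i, DifferentiableAt ℝ (pd h i) x := fun h =>
    ⟨h.differentiableAt (by norm_num), fun i => (h.pd (m := 1) (by norm_num) i).differentiableAt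
      (by norm_num)⟩
  have hterm : ∀ i, pd (fun y => f y * pd g i y - g y * pd f i y) i x
      = f x * pd (pd g i) i x - g x * pd (pd f i) i x := fun i => by
    rw [pd_sub (f := fun y => f y * pd g i y) (g := fun y => g y * pd f i y)
        ((hd hf).1.mul ((hd hg).2 i)) ((hd hg).1.mul ((hd hf).2 i)),
      pd_mul (hd hf).1 ((hd hg).2 i), pd_mul (hd hg).1 ((hd hf).2 i)]
    ring
  simp only [hterm, lap, Finset.mul_sum, Finset.sum_sub_distrib]

theorem sum_pd_pd_pd_eq_pd_lap (h : ContDiffAt ℝ 3 f x) (j : Fin n) :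
    ∑ i, pd (pd (pd f j) i) i x = pd (lap f) j x := by
  have hnear : ∀ᶠ y in 𝓝 x, ContDiffAt ℝ 2 f y := (h.of_le (by norm_num)).eventually (by simp)
  have hcomm : ∀ i, pd (pd (pd f j) i) i x = pd (pd (pd f i) i) j x := fun i => by
    rw [pd_congr (g := pd (pd f i) j)
      (by filter_upwards [hnear] with y hy using pd_pd_comm hy i j) i]
    exact pd_pd_comm (h.pd (by norm_num) i) i j
  rw [Finset.sum_congr rfl fun i _ => hcomm i, ← pd_sum Finset.univ fun i _ =>
    ((h.pd (m := 2) (by norm_num) i).pd (m := 1) (by norm_num) i).differentiableAt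
      (by norm_num)]
  rfl

theorem lap_sum_coord_mul_pd (h : ContDiffAt ℝ 3 f x) :
    lap (fun y => ∑ j, y j * pd f j y) x = 2 * lap f x + ∑ j, x j * pd (lap f) j x := by
  have hd2 : ∀ᶠ y in 𝓝 x, ∀ i j, DifferentiableAt ℝ (pd (pd f j) i) y := by
    filter_upwards [h.eventually (by simp)] with y hy i j
    exact ((hy.pd (m := 2) (by norm_num) j).pd (m := 1) (by norm_num) i).differentiableAt
      (by norm_num)
  have hd1 : ∀ᶠ y in 𝓝 x, ∀ j, DifferentiableAt ℝ (pd f j) y := by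
    filter_upwards [h.eventually (by simp)] with y hy j
    exact (hy.pd (m := 2) (by norm_num) j).differentiableAt (by norm_num)
  have hfirst : ∀ i, pd (fun y => ∑ j, y j * pd f j y) i =ᶠ[𝓝 x]
      fun y => pd f i y + ∑ j, y j * pd (pd f j) i y := fun i => by
    filter_upwards [hd1] with y hy using pd_sum_coord_mul hy i
  have hsecond : ∀ i, pd (pd (fun y => ∑ j, y j * pd f j y) i) i x
      = 2 * pd (pd f i) i x + ∑ j, x j * pd (pd (pd f j) i) i x := fun i => by
    rw [pd_congr (hfirst i) i, pd_add (g := fun y => ∑ j, y j * pd (pd f j) i y)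
      (hd1.self_of_nhds i)
      (DifferentiableAt.fun_sum fun j _ => (differentiableAt_coord j).mul (hd2.self_of_nhds i j)),
      pd_sum_coord_mul (fun j => hd2.self_of_nhds i j)]
    ring
  calc lap (fun y => ∑ j, y j * pd f j y) x
      = ∑ i, (2 * pd (pd f i) i x + ∑ j, x j * pd (pd (pd f j) i) i x) :=
        Finset.sum_congr rfl fun i _ => hsecond i
    _ = 2 * lap f x + ∑ j, x j * ∑ i, pd (pd (pd f j) i) i x := by
        simp only [Finset.sum_add_distrib, Finset.mul_sum, lap]
        rw [Finset.sum_comm]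
    _ = 2 * lap f x + ∑ j, x j * pd (lap f) j x := by
        simp only [sum_pd_pd_pd_eq_pd_lap h]

theorem sum_pd_pohozaev {z : Euc n → ℝ} (hz : z = fun y => ∑ j, y j * pd f j y)
    (h : ContDiffAt ℝ 3 f x) (hg : DifferentiableAt ℝ g x) :
    ∑ i, pd (fun y => z y * pd f i y - f y * pd z i y + y i * g y) i x
      = z x * lap f x - f x * (2 * lap f x + ∑ j, x j * pd (lap f) j x)
        + (n * g x + ∑ i, x i * pd g i x) := by
  have hz2 : ContDiffAt ℝ 2 z x := hz ▸ ContDiffAt.sum fun j _ =>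
    (EuclideanSpace.proj (𝕜 := ℝ) j).contDiff.contDiffAt.mul (h.pd (by norm_num) j)
  have hsplit : ∀ i, pd (fun y => z y * pd f i y - f y * pd z i y + y i * g y) i x
      = pd (fun y => z y * pd f i y - f y * pd z i y) i x + pd (fun y => y i * g y) i x :=
    fun i => pd_add (f := fun y => z y * pd f i y - f y * pd z i y)
      ((hz2.differentiableAt (by norm_num)).mul
          ((h.pd (m := 1) (by norm_num) i).differentiableAt (by norm_num))
        |>.sub ((h.differentiableAt (by norm_num)).mul
          ((hz2.pd (m := 1) (by norm_num) i).differentiableAt (by norm_num))))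
      ((differentiableAt_coord i).mul hg) i
  have hlapz : lap z x = 2 * lap f x + ∑ j, x j * pd (lap f) j x :=
    hz ▸ lap_sum_coord_mul_pd h
  rw [Finset.sum_congr rfl fun i _ => hsplit i, Finset.sum_add_distrib,
    sum_pd_mul_pd_sub_mul_pd hz2 (h.of_le (by norm_num)), hlapz, sum_pd_coord_mul hg]

theorem DifferentiableAt.comp_graph {g : Euc n → ℝ → ℝ}
    (hg : DifferentiableAt ℝ (fun p : Euc n × ℝ => g p.1 p.2) (x, f x))
    (hf : DifferentiableAt ℝ f x) : DifferentiableAt ℝ (fun y => g y (f y)) x :=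
  DifferentiableAt.comp (g := fun p : Euc n × ℝ => g p.1 p.2) x hg
    (differentiableAt_id.prodMk hf)

theorem pd_comp_graph {g : Euc n → ℝ → ℝ}
    (hg : DifferentiableAt ℝ (fun p : Euc n × ℝ => g p.1 p.2) (x, f x))
    (hf : DifferentiableAt ℝ f x) (i : Fin n) :
    pd (fun y => g y (f y)) i x = pd (fun y => g y (f x)) i x + deriv (g x) (f x) * pd f i x := by
  set D := fderiv ℝ (fun p : Euc n × ℝ => g p.1 p.2) (x, f x)
  have hgraph : HasFDerivAt (fun y => g y (f y))
      (D.comp ((ContinuousLinearMap.id ℝ _).prod (fderiv ℝ f x))) x :=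
    HasFDerivAt.comp (g := fun p : Euc n × ℝ => g p.1 p.2) x hg.hasFDerivAt
      ((hasFDerivAt_id x).prodMk hf.hasFDerivAt)
  have hslice : HasFDerivAt (fun y => g y (f x)) (D.comp (ContinuousLinearMap.inl ℝ _ ℝ)) x :=
    HasFDerivAt.comp (g := fun p : Euc n × ℝ => g p.1 p.2) x hg.hasFDerivAt
      (hasFDerivAt_prodMk_left (𝕜 := ℝ) x (f x))
  have hfiber : HasDerivAt (g x) (D (0, 1)) (f x) :=
    (HasFDerivAt.comp (g := fun p : Euc n × ℝ => g p.1 p.2) (f x) hg.hasFDerivAt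
      (hasFDerivAt_prodMk_right x (f x))).hasDerivAt
  rw [hgraph.pd_eq, hslice.pd_eq, hfiber.deriv, pd]
  have hsplit : ∀ (e : Euc n) (c : ℝ), ((e, c) : Euc n × ℝ) = (e, 0) + c • (0, 1) := by simp
  simp only [ContinuousLinearMap.comp_apply, ContinuousLinearMap.prod_apply,
    ContinuousLinearMap.id_apply, ContinuousLinearMap.inl_apply]
  rw [hsplit, map_add, map_smul, smul_eq_mul, mul_comm]

end PartialDerivative

theorem ContinuousOn.continuous_of_prod_univ {X Y Z : Type*} [TopologicalSpace X]
    [TopologicalSpace Y] [TopologicalSpace Z] {U : Set X} {f : X → Y → Z}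
    (hf : ContinuousOn (fun p : X × Y => f p.1 p.2) (U ×ˢ univ)) {y : X} (hy : y ∈ U) :
    Continuous (f y) :=
  hf.comp_continuous (Continuous.prodMk_right y) fun _ => ⟨hy, mem_univ _⟩

section ParametricIntegral

variable {H E : Type*} [NormedAddCommGroup H] [NormedSpace ℝ H]
  [NormedAddCommGroup E] [NormedSpace ℝ E] {U : Set H} {f : H → ℝ → E} {x₀ : H}

theorem differentiableAt_intervalIntegral_of_contDiffOn (hU : IsOpen U)
    (hf : ContDiffOn ℝ 1 (fun p : H × ℝ => f p.1 p.2) (U ×ˢ univ)) (hx₀ : x₀ ∈ U) (a b : ℝ) :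
    DifferentiableAt ℝ (fun y => ∫ s in a..b, f y s) x₀ := by
  have hUR : IsOpen (U ×ˢ (univ : Set ℝ)) := hU.prod isOpen_univ
  set D := fderiv ℝ (fun p : H × ℝ => f p.1 p.2)
  have hD : ContinuousOn D (U ×ˢ univ) := hf.continuousOn_fderiv_of_isOpen hUR le_rfl
  have hDx₀ : Continuous fun s => D (x₀, s) :=
    hD.comp_continuous (Continuous.prodMk_right x₀) fun _ => ⟨hx₀, mem_univ _⟩
  obtain ⟨C, hC⟩ : ∃ C, ∀ s ∈ uIcc a b, ‖D (x₀, s)‖ ≤ C :=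
    isCompact_uIcc.exists_bound_of_continuousOn hDx₀.continuousOn
  -- a uniform bound on the derivative for `y` near `x₀`, by the tube lemma
  have hnear : ∀ᶠ y in 𝓝 x₀, ∀ s ∈ uIcc a b, y ∈ U ∧ ‖D (y, s)‖ ≤ C + 1 := by
    refine isCompact_uIcc.eventually_forall_of_forall_eventually fun s hs => ?_
    have hmem : (x₀, s) ∈ U ×ˢ (univ : Set ℝ) := ⟨hx₀, mem_univ _⟩
    have hlt : ∀ᶠ p in 𝓝 (x₀, s), ‖D p‖ < ‖D (x₀, s)‖ + 1 :=
      ((hD.continuousAt (hUR.mem_nhds hmem)).norm.eventually (gt_mem_nhds (lt_add_one _)))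
    filter_upwards [hlt, hUR.mem_nhds hmem] with p hp hpU
    exact ⟨hpU.1, by linarith [hC s hs]⟩
  set F' : H → ℝ → H →L[ℝ] E := fun y s => (D (y, s)).comp (ContinuousLinearMap.inl ℝ H ℝ)
  have hF' : ∀ y s, ‖D (y, s)‖ ≤ C + 1 → ‖F' y s‖ ≤ C + 1 := fun y s h =>
    (ContinuousLinearMap.opNorm_comp_le _ _).trans <| by
      simpa using mul_le_mul h (ContinuousLinearMap.norm_inl_le_one ℝ H ℝ) (norm_nonneg _)
        ((norm_nonneg _).trans h)
  refine (intervalIntegral.hasFDerivAt_integral_of_dominated_of_fderiv_le (F' := F')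
    (bound := fun _ => C + 1) hnear ?_ ?_ ?_ ?_ intervalIntegrable_const ?_).differentiableAt
  · filter_upwards [hU.mem_nhds hx₀] with y hy
    exact (hf.continuousOn.continuous_of_prod_univ hy).aestronglyMeasurable
  · exact (hf.continuousOn.continuous_of_prod_univ hx₀).intervalIntegrable _ _
  · exact (hDx₀.clm_comp continuous_const).aestronglyMeasurable
  · exact Eventually.of_forall fun s hs y hy => hF' y s (hy s (uIoc_subset_uIcc hs)).2
  · refine Eventually.of_forall fun s hs y hy => ?_
    have hmem : (y, s) ∈ U ×ˢ (univ : Set ℝ) :=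
      ⟨(hy s (uIoc_subset_uIcc hs)).1, mem_univ _⟩
    exact ((hf.contDiffAt (hUR.mem_nhds hmem)).differentiableAt one_ne_zero).hasFDerivAt.comp y
      (hasFDerivAt_prodMk_left (𝕜 := ℝ) y s)

theorem hasFDerivAt_uncurry_intervalIntegral_upper [CompleteSpace E] (hU : IsOpen U)
    (hf : ContinuousOn (fun p : H × ℝ => f p.1 p.2) (U ×ˢ univ)) (hx₀ : x₀ ∈ U) (t₀ : ℝ) :
    HasFDerivAt (fun p : H × ℝ => ∫ s in t₀..p.2, f p.1 s)
      ((ContinuousLinearMap.snd ℝ H ℝ).smulRight (f x₀ t₀)) (x₀, t₀) := by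
  have hUR : IsOpen (U ×ˢ (univ : Set ℝ)) := hU.prod isOpen_univ
  rw [hasFDerivAt_iff_isLittleO, Asymptotics.isLittleO_iff]
  intro c hc
  have hclose : ∀ᶠ p in 𝓝 (x₀, t₀), p.1 ∈ U ∧ ‖f p.1 p.2 - f x₀ t₀‖ ≤ c := by
    filter_upwards [hUR.mem_nhds ⟨hx₀, mem_univ _⟩,
      (hf.continuousAt (hUR.mem_nhds ⟨hx₀, mem_univ _⟩)).eventually
        (Metric.closedBall_mem_nhds (f x₀ t₀) hc)] with p hpU hp
    exact ⟨hpU.1, by simpa [dist_eq_norm] using hp⟩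
  obtain ⟨δ, hδ, hball⟩ := Metric.eventually_nhds_iff_ball.1 hclose
  filter_upwards [Metric.ball_mem_nhds (x₀, t₀) hδ] with p hp
  have hsegment : ∀ s ∈ uIcc t₀ p.2, (p.1, s) ∈ Metric.ball (x₀, t₀) δ := fun s hs =>
    lt_of_le_of_lt (max_le_max le_rfl (by simpa [Real.dist_eq] using abs_sub_left_of_mem_uIcc hs))
      hp
  have hint : IntervalIntegrable (f p.1) volume t₀ p.2 :=
    (hf.continuous_of_prod_univ (hball _ (hsegment t₀ left_mem_uIcc)).1).intervalIntegrable _ _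
  calc ‖(∫ s in t₀..p.2, f p.1 s) - (∫ s in t₀..t₀, f x₀ s)
          - ((ContinuousLinearMap.snd ℝ H ℝ).smulRight (f x₀ t₀)) (p - (x₀, t₀))‖
      = ‖∫ s in t₀..p.2, (f p.1 s - f x₀ t₀)‖ := by
        rw [intervalIntegral.integral_sub hint intervalIntegrable_const,
          intervalIntegral.integral_const]
        simp
    _ ≤ c * |p.2 - t₀| := intervalIntegral.norm_integral_le_of_norm_le_const fun s hs =>
        (hball _ (hsegment s (uIoc_subset_uIcc hs))).2
    _ ≤ c * ‖p - (x₀, t₀)‖ := by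
        gcongr
        simp [Prod.norm_def]

theorem differentiableAt_uncurry_intervalIntegral_of_contDiffOn [CompleteSpace E] (hU : IsOpen U)
    (hf : ContDiffOn ℝ 1 (fun p : H × ℝ => f p.1 p.2) (U ×ˢ univ)) (hx₀ : x₀ ∈ U) (a t₀ : ℝ) :
    DifferentiableAt ℝ (fun p : H × ℝ => ∫ s in a..p.2, f p.1 s) (x₀, t₀) := by
  have hsplit : (fun p : H × ℝ => ∫ s in a..p.2, f p.1 s) =ᶠ[𝓝 (x₀, t₀)]
      fun p => (∫ s in a..t₀, f p.1 s) + ∫ s in t₀..p.2, f p.1 s := by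
    filter_upwards [continuousAt_fst.preimage_mem_nhds (hU.mem_nhds hx₀)] with p hp
    have hcont := hf.continuousOn.continuous_of_prod_univ hp
    exact (intervalIntegral.integral_add_adjacent_intervals
      (hcont.intervalIntegrable _ _) (hcont.intervalIntegrable _ _)).symm
  refine DifferentiableAt.congr_of_eventuallyEq ?_ hsplit
  exact ((differentiableAt_intervalIntegral_of_contDiffOn hU hf hx₀ a t₀).comp (x₀, t₀)
    differentiableAt_fst).add
    (hasFDerivAt_uncurry_intervalIntegral_upper hU hf.continuousOn hx₀ t₀).differentiableAt

end ParametricIntegral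

/-- the pointwise (differential form of) Pohozaev identity for a solution of
`Δu + f(x,u) = 0` on `Ω`, with `z = x·∇u` and `F(x,u) = ∫₀ᵘ f(x,t) dt`. -/
theorem stmt1 {n : ℕ} (Ω : Set (Euc n)) (hΩ : IsOpen Ω)
    (f : Euc n → ℝ → ℝ)
    (hf : ContDiffOn ℝ 1 (fun p : Euc n × ℝ => f p.1 p.2) (Ω ×ˢ (univ : Set ℝ)))
    (F : Euc n → ℝ → ℝ) (hF : ∀ x t, F x t = ∫ s in (0:ℝ)..t, f x s)
    (u : Euc n → ℝ) (hu : ContDiffOn ℝ 3 u Ω)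
    (heq : ∀ x ∈ Ω, lap u x + f x (u x) = 0)
    (z : Euc n → ℝ) (hz : z = fun x => ∑ i, x i * pd u i x) :
    ∀ x ∈ Ω,
      ∑ i, pd (fun y =>
          z y * pd u i y - u y * pd z i y + y i * (2 * F y (u y) - u y * f y (u y))) i x
        = 2 * n * F x (u x) + (2 - n) * u x * f x (u x)
            + 2 * ∑ i, x i * pd (fun y => F y (u x)) i x := by
  intro x hx
  have hu3 : ContDiffAt ℝ 3 u x := hu.contDiffAt (hΩ.mem_nhds hx)
  have hu1 : DifferentiableAt ℝ u x := hu3.differentiableAt (by norm_num)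
  have hFx : DifferentiableAt ℝ (fun p : Euc n × ℝ => F p.1 p.2) (x, u x) := by
    simpa only [hF] using differentiableAt_uncurry_intervalIntegral_of_contDiffOn hΩ hf hx 0 (u x)
  have hfx : DifferentiableAt ℝ (fun p : Euc n × ℝ => f p.1 p.2) (x, u x) :=
    (hf.contDiffAt ((hΩ.prod isOpen_univ).mem_nhds ⟨hx, mem_univ _⟩)).differentiableAt
      one_ne_zero
  have hFt : deriv (F x) (u x) = f x (u x) := by
    rw [funext (hF x)]
    exact Continuous.deriv_integral _ (hf.continuousOn.continuous_of_prod_univ hx) 0 (u x)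
  have hlap : ∀ᶠ y in 𝓝 x, lap u y = -f y (u y) := by
    filter_upwards [hΩ.mem_nhds hx] with y hy
    linarith [heq y hy]
  have hFu := hFx.comp_graph hu1
  have hfu := hfx.comp_graph hu1
  have hGx : DifferentiableAt ℝ (fun y => 2 * F y (u y) - u y * f y (u y)) x :=
    (hFu.const_mul 2).sub (hu1.mul hfu)
  have hpdG : ∀ i, pd (fun y => 2 * F y (u y) - u y * f y (u y)) i x
      = 2 * pd (fun y => F y (u x)) i x + f x (u x) * pd u i x
        - u x * pd (fun y => f y (u y)) i x := fun i => by
    rw [pd_sub (f := fun y => 2 * F y (u y)) (g := fun y => u y * f y (u y))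
      (hFu.const_mul 2) (hu1.mul hfu), pd_const_mul 2 hFu, pd_mul hu1 hfu,
      pd_comp_graph hFx hu1, hFt]
    ring
  have hpdlap : ∀ j, pd (lap u) j x = -pd (fun y => f y (u y)) j x := fun j =>
    (pd_congr hlap j).trans (pd_neg j)
  rw [sum_pd_pohozaev hz hu3 hGx, hlap.self_of_nhds]
  simp only [hz, hpdlap, hpdG, mul_sub, mul_add, mul_neg, Finset.sum_sub_distrib,
    Finset.sum_add_distrib, Finset.sum_neg_distrib, mul_left_comm (x _), ← Finset.mul_sum]
  ring
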